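/- arXiv:1909.00358 — 4 statements merged into one kernel-verified Lean document; each statement's English description precedes it below -/
import Mathlib

section
/- A commutative algebra over ℂ satisfying the terminal identity [[[P,a],P],P] = 0 for all a is a Jordan algebra, i.e., it satisfies (x²y)x = x²(yx). -/
/-!
Evaluate the terminal identity with `a = x` at the arguments `(x, x, y)`. By commutativity
every term cancels except `3 • (x(x²y) - x²(xy))`, so the Jordan identity holds as soon as
`3` is invertible in the scalars.
-/

def kbr1 {V : Type*} [AddCommGroup V] (A : V → V) (B : V → V → V) : V → V → V :=
  fun x y => A (B x y) - B (A x) y - B x (A y)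

def kbr2 {V : Type*} [AddCommGroup V] (B C : V → V → V) : V → V → V → V :=
  fun x y z => B (C x y) z + B x (C y z) + B y (C x z)
    - C (B x y) z - C x (B y z) - C y (B x z)

def IsTerminal {V : Type*} [AddCommGroup V] (P : V → V → V) : Prop :=
  ∀ a x y z, kbr2 (kbr1 (fun w => P a w) P) P x y z = 0

theorem kbr2_kbr1_mul_left_self_self {R V : Type*} [CommSemiring R] [AddCommGroup V]
    [Module R V] (mul : V →ₗ[R] V →ₗ[R] V) (hcomm : ∀ x y, mul x y = mul y x) (x y : V) :
    kbr2 (kbr1 (fun w => mul x w) fun u v => mul u v) (fun u v => mul u v) x x y =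
      3 • (mul x (mul (mul x x) y) - mul (mul x x) (mul x y)) := by
  simp only [kbr1, kbr2, map_sub, LinearMap.sub_apply, hcomm (mul x x) x]
  abel

theorem IsTerminal.jordan {R V : Type*} [CommSemiring R] [AddCommGroup V] [Module R V]
    (h3 : IsUnit (3 : R)) (mul : V →ₗ[R] V →ₗ[R] V) (hcomm : ∀ x y, mul x y = mul y x)
    (hterm : IsTerminal fun x y => mul x y) (x y : V) :
    mul (mul x x) (mul y x) = mul (mul (mul x x) y) x := by
  have h := kbr2_kbr1_mul_left_self_self mul hcomm x y
  rw [hterm, eq_comm, ← ofNat_smul_eq_nsmul R, h3.smul_eq_zero, sub_eq_zero] at h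
  rw [hcomm y x, hcomm (mul (mul x x) y) x, h]

/-- A commutative algebra over ℂ satisfying the terminal identity is a Jordan algebra:
it satisfies `(x·x)·(y·x) = ((x·x)·y)·x`. -/
theorem stmt1 {V : Type*} [AddCommGroup V] [Module ℂ V]
    (mul : V →ₗ[ℂ] V →ₗ[ℂ] V)
    (hcomm : ∀ x y, mul x y = mul y x)
    (hterm : IsTerminal (fun x y => mul x y)) :
    ∀ x y, mul (mul x x) (mul y x) = mul (mul (mul x x) y) x :=
  hterm.jordan (by norm_num) mul hcomm
end

section
/- Every left Leibniz algebra (an algebra satisfying x(yz) = (xy)z + y(xz)) is a terminal algebra, i.e., satisfies [[[P,a],P],P] = 0 for all a. -/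
theorem kbr1_left_mul_eq_zero {V : Type*} [AddCommGroup V] {P : V → V → V}
    (hLeib : ∀ a x y, P a (P x y) = P (P a x) y + P x (P a y)) (a : V) :
    kbr1 (P a) P = 0 := by
  ext x y
  rw [kbr1, hLeib, Pi.zero_apply, Pi.zero_apply]
  abel

theorem kbr2_zero_left {V : Type*} [AddCommGroup V] (C : V → V → V)
    (hC₁ : ∀ y, C 0 y = 0) (hC₂ : ∀ x, C x 0 = 0) :
    kbr2 0 C = 0 := by
  ext x y z
  simp [kbr2, hC₁, hC₂]

/-- Every left Leibniz algebra is terminal. -/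
theorem stmt2 {V : Type*} [AddCommGroup V] [Module ℂ V]
    (mul : V →ₗ[ℂ] V →ₗ[ℂ] V)
    (hLeib : ∀ a x y, mul a (mul x y) = mul (mul a x) y + mul x (mul a y)) :
    IsTerminal (fun x y => mul x y) := by
  intro a x y z
  rw [kbr1_left_mul_eq_zero hLeib a, kbr2_zero_left _ (by simp) (by simp)]
  rfl
end

section
/- The 4-dimensional algebra over ℂ with basis e₁,e₂,e₃,e₄ and nonzero products e₁e₁ = e₂, e₁e₂ = e₄, e₂e₁ = e₃ (all other basis products zero) is a terminal algebra but is not a left Leibniz algebra. -/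
def LeftLeibniz {V : Type*} [AddCommGroup V] (P : V → V → V) : Prop :=
  ∀ a x y, P a (P x y) = P (P a x) y + P x (P a y)

/-- The algebra T⁴₀₂ with basis `e₁,e₂,e₃,e₄` and nonzero products
`e₁e₁ = e₂`, `e₁e₂ = e₄`, `e₂e₁ = e₃` (here `eᵢ = Pi.single (i-1) 1`). -/
def mulT402 (x y : Fin 4 → ℂ) : Fin 4 → ℂ :=
  (x 0 * y 0) • (Pi.single 1 1 : Fin 4 → ℂ) + (x 0 * y 1) • (Pi.single 3 1 : Fin 4 → ℂ) + (x 1 * y 0) • (Pi.single 2 1 : Fin 4 → ℂ)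


/-!
Every product in T⁴₀₂ has vanishing `e₁`-coordinate, products of three elements lie in
`span(e₃, e₄)`, and `e₃, e₄` annihilate the algebra; hence all products of four elements vanish.
Each term of `[[[P,a],P],P]` is such a product, so the algebra is terminal. The Leibniz identity
fails at `a = x = y = e₁`: `e₁(e₁e₁) = e₄` while `(e₁e₁)e₁ + e₁(e₁e₁) = e₃ + e₄`.
-/

def FourfoldProductsVanish {V : Type*} [Zero V] (P : V → V → V) : Prop :=
  ∀ a b c d, P (P (P a b) c) d = 0 ∧ P (P a (P b c)) d = 0 ∧ P (P a b) (P c d) = 0 ∧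
    P a (P (P b c) d) = 0 ∧ P a (P b (P c d)) = 0

theorem isTerminal_of_fourfoldProductsVanish {V : Type*} [AddCommGroup V] {P : V → V → V}
    (hsub_left : ∀ x y z, P (x - y) z = P x z - P y z)
    (hsub_right : ∀ x y z, P x (y - z) = P x y - P x z) (hP : FourfoldProductsVanish P) :
    IsTerminal P := by
  intro a x y z
  simp only [kbr2, kbr1, hsub_left, hsub_right, (hP _ _ _ _).1, (hP _ _ _ _).2.1,
    (hP _ _ _ _).2.2.1, (hP _ _ _ _).2.2.2.1, (hP _ _ _ _).2.2.2.2, sub_zero, add_zero]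

section T402

variable (u v : Fin 4 → ℂ)

@[simp]
theorem mulT402_apply_zero : mulT402 u v 0 = 0 := by
  simp [mulT402]

@[simp]
theorem mulT402_apply_one : mulT402 u v 1 = u 0 * v 0 := by
  simp [mulT402]

theorem mulT402_apply_two : mulT402 u v 2 = u 1 * v 0 := by
  simp [mulT402]

theorem mulT402_sub_left (w : Fin 4 → ℂ) : mulT402 (u - v) w = mulT402 u w - mulT402 v w := by
  ext i
  fin_cases i <;> simp [mulT402] <;> ring

theorem mulT402_sub_right (w : Fin 4 → ℂ) : mulT402 u (v - w) = mulT402 u v - mulT402 u w := by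
  ext i
  fin_cases i <;> simp [mulT402] <;> ring

variable {u v}

theorem mulT402_eq_zero (h₀₀ : u 0 * v 0 = 0) (h₀₁ : u 0 * v 1 = 0) (h₁₀ : u 1 * v 0 = 0) :
    mulT402 u v = 0 := by
  simp [mulT402, h₀₀, h₀₁, h₁₀]

theorem fourfoldProductsVanish_mulT402 : FourfoldProductsVanish mulT402 := by
  intro a b c d
  refine ⟨?_, ?_, ?_, ?_, ?_⟩ <;> apply mulT402_eq_zero <;> simp

theorem not_leftLeibniz_mulT402 : ¬ LeftLeibniz mulT402 := by
  intro h
  have e₁ := congrFun (h (Pi.single 0 1) (Pi.single 0 1) (Pi.single 0 1)) 2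
  simp [mulT402_apply_two] at e₁

end T402

/-- T⁴₀₂ is terminal but not left Leibniz. -/
theorem stmt9 : IsTerminal mulT402 ∧ ¬ LeftLeibniz mulT402 :=
  ⟨isTerminal_of_fourfoldProductsVanish mulT402_sub_left mulT402_sub_right
    fourfoldProductsVanish_mulT402, not_leftLeibniz_mulT402⟩
end

section
/- For every λ ∈ ℂ, the 3-dimensional algebra T³₀₁(λ) over ℂ with basis e₁,e₂,e₃ and nonzero products e₁e₁ = e₂, e₁e₂ = λe₃, e₂e₁ = e₃ is a terminal algebra, and it is not a left Leibniz algebra (for any λ). -/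
/-- The algebra T³₀₁(λ): basis `e₁,e₂,e₃`, nonzero products
`e₁e₁ = e₂`, `e₁e₂ = λe₃`, `e₂e₁ = e₃`. -/
def mulT301 (lam : ℂ) (x y : Fin 3 → ℂ) : Fin 3 → ℂ :=
  (x 0 * y 0) • (Pi.single 1 1 : Fin 3 → ℂ)
    + (lam * (x 0 * y 1) + x 1 * y 0) • (Pi.single 2 1 : Fin 3 → ℂ)

lemma mul0 (lam : ℂ) (x y : Fin 3 → ℂ) : mulT301 lam x y 0 = 0 := by
  simp [mulT301, Pi.single]
lemma mul1 (lam : ℂ) (x y : Fin 3 → ℂ) : mulT301 lam x y 1 = x 0 * y 0 := by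
  simp [mulT301, Pi.single]
lemma mul2 (lam : ℂ) (x y : Fin 3 → ℂ) : mulT301 lam x y 2 = lam * (x 0 * y 1) + x 1 * y 0 := by
  simp [mulT301, Pi.single]

/-- For every λ, T³₀₁(λ) is terminal and is not a left Leibniz algebra. -/
theorem stmt10 (lam : ℂ) : IsTerminal (mulT301 lam) ∧ ¬ LeftLeibniz (mulT301 lam) := by
  constructor
  · intro a x y z
    funext i
    fin_cases i <;>
      simp [kbr2, kbr1, mulT301, Pi.single_apply]
  · intro h
    have := congrFun (h (Pi.single 0 1) (Pi.single 0 1) (Pi.single 0 1)) 2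
    simp [mul2, mul1, mul0, Pi.single] at this
end
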